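/- Define g₁(t) = (6 − 24t² + 16t⁴)/(1−t²)^{3/2} and g₂(t) = 256·t⁵·(27 − 192t² + 510t⁴ − 672t⁶ + 392t⁸)/(3 − 16t² + 28t⁴)³. Then: (i) for every t ∈ (0, 1/√2), (1−t²)·g₁''(t) − 5t·g₁'(t) + 5·g₁(t) = 0; (ii) for every t ∈ (1/√2, 1], (1−t²)·g₂''(t) − 5t·g₂'(t) + 5·g₂(t) = 46080·t³·(27 − 270t² + 720t⁴ + 240t⁶ − 2800t⁸ + 2208t¹⁰)/(3 − 16t² + 28t⁴)⁵; (iii) this last expression is strictly negative for some t ∈ (1/√2, 1) and strictly positive at t = 1. -/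

import Mathlib

open Set

/-- The first piece `g₁(t) = (6 − 24t² + 16t⁴)/(1−t²)^{3/2}` of the inverse
spherical Radon transform of `1/ρ_{IC}` for the six-dimensional cylinder. -/
noncomputable def gOne (t : ℝ) : ℝ :=
  (6 - 24 * t ^ 2 + 16 * t ^ 4) / (1 - t ^ 2) ^ ((3 : ℝ) / 2)

/-- The second piece
`g₂(t) = 256t⁵(27 − 192t² + 510t⁴ − 672t⁶ + 392t⁸)/(3 − 16t² + 28t⁴)³`. -/
noncomputable def gTwo (t : ℝ) : ℝ :=
  256 * t ^ 5 * (27 - 192 * t ^ 2 + 510 * t ^ 4 - 672 * t ^ 6 + 392 * t ^ 8) /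
    (3 - 16 * t ^ 2 + 28 * t ^ 4) ^ 3

/-- The value on `(1/√2, 1]` of the Goodey–Weyl operator applied to the inverse
Radon transform of `1/ρ_{IC}`. -/
noncomputable def qCyl (t : ℝ) : ℝ :=
  46080 * t ^ 3 *
    (27 - 270 * t ^ 2 + 720 * t ^ 4 + 240 * t ^ 6 - 2800 * t ^ 8 + 2208 * t ^ 10) /
    (3 - 16 * t ^ 2 + 28 * t ^ 4) ^ 5

noncomputable def g1d (t : ℝ) : ℝ :=
  (-30 * t + 40 * t ^ 3 - 16 * t ^ 5) / (1 - t ^ 2) ^ ((5 : ℝ) / 2)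

noncomputable def g1dd (t : ℝ) : ℝ :=
  (-30) / (1 - t ^ 2) ^ ((7 : ℝ) / 2)

lemma hasDerivAt_gOne {t : ℝ} (ht : t ^ 2 < 1) :
    HasDerivAt (fun t : ℝ => (6 - 24 * t ^ 2 + 16 * t ^ 4) / (1 - t ^ 2) ^ ((3 : ℝ) / 2))
      (g1d t) t := by
  have hD : (0 : ℝ) < 1 - t ^ 2 := by linarith
  have hin : HasDerivAt (fun t : ℝ => 1 - t ^ 2) (-(2 * t)) t := by
    simpa [Pi.sub_def, Pi.add_def] using (hasDerivAt_const t (1 : ℝ)).sub (hasDerivAt_pow 2 t)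
  have hden : HasDerivAt (fun t : ℝ => (1 - t ^ 2) ^ ((3 : ℝ) / 2))
      (-(2 * t) * ((3 : ℝ) / 2) * (1 - t ^ 2) ^ ((3 : ℝ) / 2 - 1)) t :=
    hin.rpow_const (Or.inr (by norm_num))
  have hnum : HasDerivAt (fun t : ℝ => 6 - 24 * t ^ 2 + 16 * t ^ 4)
      (-(24 * (2 * t)) + 16 * (4 * t ^ 3)) t := by
    simpa [Pi.sub_def, Pi.add_def] using ((hasDerivAt_const t (6 : ℝ)).sub ((hasDerivAt_pow 2 t).const_mul 24)).add
      ((hasDerivAt_pow 4 t).const_mul 16)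
  have hne : (1 - t ^ 2) ^ ((3 : ℝ) / 2) ≠ 0 := (Real.rpow_pos_of_pos hD _).ne'
  have h := hnum.div hden hne
  simp only [Pi.div_def] at h
  refine h.congr_deriv ?_
  have e1 : (1 - t ^ 2) ^ ((3 : ℝ) / 2) = (1 - t ^ 2) * (1 - t ^ 2) ^ ((1 : ℝ) / 2) := by
    rw [show (3 : ℝ) / 2 = 1 + 1 / 2 by norm_num, Real.rpow_add hD, Real.rpow_one]
  have e2 : (1 - t ^ 2) ^ ((5 : ℝ) / 2) = (1 - t ^ 2) ^ 2 * (1 - t ^ 2) ^ ((1 : ℝ) / 2) := by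
    rw [show (5 : ℝ) / 2 = 2 + 1 / 2 by norm_num, Real.rpow_add hD]
    norm_num [Real.rpow_natCast]
  have e3 : (1 - t ^ 2) ^ ((3 : ℝ) / 2 - 1) = (1 - t ^ 2) ^ ((1 : ℝ) / 2) := by norm_num
  have hu : (1 - t ^ 2) ^ ((1 : ℝ) / 2) ≠ 0 := (Real.rpow_pos_of_pos hD _).ne'
  rw [g1d, e1, e2, e3, div_eq_div_iff (by positivity) (by positivity)]
  ring

lemma hasDerivAt_g1d {t : ℝ} (ht : t ^ 2 < 1) : HasDerivAt g1d (g1dd t) t := by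
  have hD : (0 : ℝ) < 1 - t ^ 2 := by linarith
  have hin : HasDerivAt (fun t : ℝ => 1 - t ^ 2) (-(2 * t)) t := by
    simpa [Pi.sub_def, Pi.add_def] using (hasDerivAt_const t (1 : ℝ)).sub (hasDerivAt_pow 2 t)
  have hden : HasDerivAt (fun t : ℝ => (1 - t ^ 2) ^ ((5 : ℝ) / 2))
      (-(2 * t) * ((5 : ℝ) / 2) * (1 - t ^ 2) ^ ((5 : ℝ) / 2 - 1)) t :=
    hin.rpow_const (Or.inr (by norm_num))
  have hnum : HasDerivAt (fun t : ℝ => -30 * t + 40 * t ^ 3 - 16 * t ^ 5)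
      (-30 * 1 + 40 * (3 * t ^ 2) - 16 * (5 * t ^ 4)) t := by
    simpa [Pi.sub_def, Pi.add_def] using (((hasDerivAt_id t).const_mul (-30 : ℝ)).add
      ((hasDerivAt_pow 3 t).const_mul 40)).sub ((hasDerivAt_pow 5 t).const_mul 16)
  have hne : (1 - t ^ 2) ^ ((5 : ℝ) / 2) ≠ 0 := (Real.rpow_pos_of_pos hD _).ne'
  have h := hnum.div hden hne
  simp only [Pi.div_def] at h
  have hfun : g1d = fun t : ℝ =>
      (-30 * t + 40 * t ^ 3 - 16 * t ^ 5) / (1 - t ^ 2) ^ ((5 : ℝ) / 2) := rfl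
  rw [hfun]
  refine h.congr_deriv ?_
  have e2 : (1 - t ^ 2) ^ ((5 : ℝ) / 2) = (1 - t ^ 2) ^ 2 * (1 - t ^ 2) ^ ((1 : ℝ) / 2) := by
    rw [show (5 : ℝ) / 2 = 2 + 1 / 2 by norm_num, Real.rpow_add hD]
    norm_num [Real.rpow_natCast]
  have e7 : (1 - t ^ 2) ^ ((7 : ℝ) / 2) = (1 - t ^ 2) ^ 3 * (1 - t ^ 2) ^ ((1 : ℝ) / 2) := by
    rw [show (7 : ℝ) / 2 = ((3:ℕ):ℝ) + 1 / 2 by norm_num, Real.rpow_add hD, Real.rpow_natCast]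
  have e3 : (1 - t ^ 2) ^ ((5 : ℝ) / 2 - 1) = (1 - t ^ 2) * (1 - t ^ 2) ^ ((1 : ℝ) / 2) := by
    rw [show (5 : ℝ) / 2 - 1 = 1 + 1 / 2 by norm_num, Real.rpow_add hD, Real.rpow_one]
  have hu : (0:ℝ) < (1 - t ^ 2) ^ ((1 : ℝ) / 2) := Real.rpow_pos_of_pos hD _
  rw [g1dd, e2, e7, e3, div_eq_div_iff (by positivity) (by positivity)]
  ring

lemma qpos (t : ℝ) : 0 < 3 - 16 * t ^ 2 + 28 * t ^ 4 := by
  nlinarith [sq_nonneg (t ^ 2 - 2 / 7), sq_nonneg t]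

noncomputable def g2d (t : ℝ) : ℝ :=
  (103680 * t ^ 4 - 921600 * t ^ 6 + 2956800 * t ^ 8 - 5062656 * t ^ 10 + 6709248 * t ^ 12
    - 6422528 * t ^ 14 + 2809856 * t ^ 16) / (3 - 16 * t ^ 2 + 28 * t ^ 4) ^ 4

noncomputable def g2dd (t : ℝ) : ℝ :=
  (1244160 * t ^ 3 - 9953280 * t ^ 5 + 6635520 * t ^ 7 + 106168320 * t ^ 9
    - 258785280 * t ^ 11 + 151388160 * t ^ 13) / (3 - 16 * t ^ 2 + 28 * t ^ 4) ^ 5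

lemma hasDerivAt_gTwo (t : ℝ) :
    HasDerivAt (fun t : ℝ => 256 * t ^ 5 *
      (27 - 192 * t ^ 2 + 510 * t ^ 4 - 672 * t ^ 6 + 392 * t ^ 8) /
      (3 - 16 * t ^ 2 + 28 * t ^ 4) ^ 3) (g2d t) t := by
  have hQ := qpos t
  have hq : HasDerivAt (fun t : ℝ => 3 - 16 * t ^ 2 + 28 * t ^ 4)
      (-(16 * (2 * t)) + 28 * (4 * t ^ 3)) t := by
    simpa [Pi.sub_def, Pi.add_def] using ((hasDerivAt_const t (3 : ℝ)).sub ((hasDerivAt_pow 2 t).const_mul 16)).add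
      ((hasDerivAt_pow 4 t).const_mul 28)
  have hden := hq.pow 3
  have ha : HasDerivAt (fun t : ℝ => 256 * t ^ 5) (256 * (5 * t ^ 4)) t := by
    simpa [Pi.sub_def, Pi.add_def] using (hasDerivAt_pow 5 t).const_mul (256 : ℝ)
  have hb : HasDerivAt (fun t : ℝ => 27 - 192 * t ^ 2 + 510 * t ^ 4 - 672 * t ^ 6 + 392 * t ^ 8)
      (-(192 * (2 * t)) + 510 * (4 * t ^ 3) - 672 * (6 * t ^ 5) + 392 * (8 * t ^ 7)) t := by
    simpa [Pi.sub_def, Pi.add_def] using ((((hasDerivAt_const t (27 : ℝ)).sub ((hasDerivAt_pow 2 t).const_mul 192)).add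
      ((hasDerivAt_pow 4 t).const_mul 510)).sub ((hasDerivAt_pow 6 t).const_mul 672)).add
      ((hasDerivAt_pow 8 t).const_mul 392)
  have h := (ha.mul hb).div hden (pow_ne_zero 3 hQ.ne')
  simp only [Pi.div_def, Pi.mul_def, Pi.pow_def] at h
  refine h.congr_deriv ?_
  rw [g2d, div_eq_div_iff (by positivity) (by positivity)]
  ring

lemma hasDerivAt_g2d (t : ℝ) : HasDerivAt g2d (g2dd t) t := by
  have hQ := qpos t
  have hq : HasDerivAt (fun t : ℝ => 3 - 16 * t ^ 2 + 28 * t ^ 4)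
      (-(16 * (2 * t)) + 28 * (4 * t ^ 3)) t := by
    simpa [Pi.sub_def, Pi.add_def] using ((hasDerivAt_const t (3 : ℝ)).sub ((hasDerivAt_pow 2 t).const_mul 16)).add
      ((hasDerivAt_pow 4 t).const_mul 28)
  have hden := hq.pow 4
  have hnum : HasDerivAt (fun t : ℝ => 103680 * t ^ 4 - 921600 * t ^ 6 + 2956800 * t ^ 8
      - 5062656 * t ^ 10 + 6709248 * t ^ 12 - 6422528 * t ^ 14 + 2809856 * t ^ 16)
      (103680 * (4 * t ^ 3) - 921600 * (6 * t ^ 5) + 2956800 * (8 * t ^ 7)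
        - 5062656 * (10 * t ^ 9) + 6709248 * (12 * t ^ 11) - 6422528 * (14 * t ^ 13)
        + 2809856 * (16 * t ^ 15)) t := by
    simpa [Pi.sub_def, Pi.add_def] using (((((((hasDerivAt_pow 4 t).const_mul (103680 : ℝ)).sub
      ((hasDerivAt_pow 6 t).const_mul 921600)).add
      ((hasDerivAt_pow 8 t).const_mul 2956800)).sub
      ((hasDerivAt_pow 10 t).const_mul 5062656)).add
      ((hasDerivAt_pow 12 t).const_mul 6709248)).sub
      ((hasDerivAt_pow 14 t).const_mul 6422528)).add
      ((hasDerivAt_pow 16 t).const_mul 2809856)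
  have h := hnum.div hden (pow_ne_zero 4 hQ.ne')
  simp only [Pi.div_def, Pi.mul_def, Pi.pow_def] at h
  have hfun : g2d = fun t : ℝ => (103680 * t ^ 4 - 921600 * t ^ 6 + 2956800 * t ^ 8
      - 5062656 * t ^ 10 + 6709248 * t ^ 12 - 6422528 * t ^ 14 + 2809856 * t ^ 16) /
      (3 - 16 * t ^ 2 + 28 * t ^ 4) ^ 4 := rfl
  rw [hfun]
  refine h.congr_deriv ?_
  rw [g2dd, div_eq_div_iff (by positivity) (by positivity)]
  ring

/-- **The Goodey–Weyl operator on the cylinder's inverse Radon transform.**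
(i) `(1−t²)g₁'' − 5tg₁' + 5g₁ = 0` on `(0, 1/√2)`;
(ii) `(1−t²)g₂'' − 5tg₂' + 5g₂ = q` on `(1/√2, 1]`, where
`q(t) = 46080t³(27 − 270t² + 720t⁴ + 240t⁶ − 2800t⁸ + 2208t¹⁰)/(3 − 16t² + 28t⁴)⁵`;
(iii) `q` is strictly negative somewhere in `(1/√2, 1)` and strictly positive at `t = 1`. -/
theorem cylinder_goodey_weyl_operator :
    (∀ t ∈ Ioo (0 : ℝ) (Real.sqrt 2)⁻¹,
      (1 - t ^ 2) * deriv (deriv gOne) t - 5 * t * deriv gOne t + 5 * gOne t = 0) ∧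
    (∀ t ∈ Ioc ((Real.sqrt 2)⁻¹ : ℝ) 1,
      (1 - t ^ 2) * deriv (deriv gTwo) t - 5 * t * deriv gTwo t + 5 * gTwo t = qCyl t) ∧
    (∃ t ∈ Ioo ((Real.sqrt 2)⁻¹ : ℝ) 1, qCyl t < 0) ∧
    0 < qCyl 1 := by
  have hsqrt : (5 / 4 : ℝ) < Real.sqrt 2 := by
    nlinarith [Real.sq_sqrt (show (0:ℝ) ≤ 2 by norm_num), Real.sqrt_nonneg 2]
  have hOne : gOne = fun t : ℝ =>
      (6 - 24 * t ^ 2 + 16 * t ^ 4) / (1 - t ^ 2) ^ ((3 : ℝ) / 2) := rfl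
  have hTwo : gTwo = fun t : ℝ => 256 * t ^ 5 *
      (27 - 192 * t ^ 2 + 510 * t ^ 4 - 672 * t ^ 6 + 392 * t ^ 8) /
      (3 - 16 * t ^ 2 + 28 * t ^ 4) ^ 3 := rfl
  refine ⟨?_, ?_, ?_, ?_⟩
  · intro t ht
    obtain ⟨h0, h1⟩ := ht
    have ht2 : t ^ 2 < 1 := by
      have hlt : t < 1 := lt_of_lt_of_le h1 (by
        rw [inv_le_one_iff₀]
        right
        nlinarith)
      nlinarith
    have hD : (0:ℝ) < 1 - t ^ 2 := by linarith
    have hS : IsOpen {s : ℝ | s ^ 2 < 1} :=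
      isOpen_lt (by continuity) continuous_const
    have hev : deriv gOne =ᶠ[nhds t] g1d := by
      filter_upwards [hS.mem_nhds ht2] with s hs
      rw [hOne]
      exact (hasDerivAt_gOne hs).deriv
    have hd1 : deriv gOne t = g1d t := by
      rw [hOne]; exact (hasDerivAt_gOne ht2).deriv
    have hd2 : deriv (deriv gOne) t = g1dd t := by
      rw [hev.deriv_eq]; exact (hasDerivAt_g1d ht2).deriv
    rw [hd1, hd2]
    simp only [gOne, g1d, g1dd]
    have e1 : (1 - t ^ 2) ^ ((3 : ℝ) / 2) = (1 - t ^ 2) * (1 - t ^ 2) ^ ((1 : ℝ) / 2) := by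
      rw [show (3 : ℝ) / 2 = 1 + 1 / 2 by norm_num, Real.rpow_add hD, Real.rpow_one]
    have e2 : (1 - t ^ 2) ^ ((5 : ℝ) / 2) = (1 - t ^ 2) ^ 2 * (1 - t ^ 2) ^ ((1 : ℝ) / 2) := by
      rw [show (5 : ℝ) / 2 = ((2:ℕ):ℝ) + 1 / 2 by norm_num, Real.rpow_add hD, Real.rpow_natCast]
    have e7 : (1 - t ^ 2) ^ ((7 : ℝ) / 2) = (1 - t ^ 2) ^ 3 * (1 - t ^ 2) ^ ((1 : ℝ) / 2) := by
      rw [show (7 : ℝ) / 2 = ((3:ℕ):ℝ) + 1 / 2 by norm_num, Real.rpow_add hD, Real.rpow_natCast]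
    have hu : (0:ℝ) < (1 - t ^ 2) ^ ((1 : ℝ) / 2) := Real.rpow_pos_of_pos hD _
    rw [e1, e2, e7]
    field_simp
    ring
  · intro t ht
    have hd1 : deriv gTwo = g2d := by
      funext s
      rw [hTwo]
      exact (hasDerivAt_gTwo s).deriv
    have hd2 : deriv (deriv gTwo) t = g2dd t := by
      rw [hd1]; exact (hasDerivAt_g2d t).deriv
    rw [hd2, hd1]
    simp only [gTwo, g2d, g2dd, qCyl]
    have hQ := qpos t
    field_simp
    ring
  · refine ⟨4/5, ⟨?_, by norm_num⟩, ?_⟩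
    · calc (Real.sqrt 2)⁻¹ < (5/4 : ℝ)⁻¹ := by
            exact inv_strictAnti₀ (by norm_num) hsqrt
        _ = 4/5 := by norm_num
    · norm_num [qCyl]
  · norm_num [qCyl]
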